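/- arXiv:1910.03231 — 2 statements merged into one kernel-verified Lean document; each statement's English description precedes it below -/
import Mathlib

section
/- Suppose e₋₁ + e₊₁ < 1 and δ_{p̃} := P(Ỹ = +1) − P(Ỹ = −1) ≠ 0, and set α* := 1 − (1 − e₋₁ − e₊₁)·δ_p/δ_{p̃}, where δ_p := P(Y = +1) − P(Y = −1). Then any minimizer f̃* ∈ argmin_{f∈ℱ} E_{D̃}[𝟙_{α*-peer}(f(X), Ỹ)] of the expected α*-weighted 0-1 peer risk over the noisy distribution satisfies f̃* ∈ argmin_{f∈ℱ} R_D(f). -/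
/-!
For a `±1`-valued prediction `S` that, like `f(X)`, is conditionally independent of the noisy
label `T` given `Y`, the noisy risk is affine in the clean risk and in `P(S = -1)`:
`P(S ≠ T) = (1 - e₋₁ - e₊₁) P(S ≠ Y) + (e₋₁ - e₊₁) P(S = -1) + e₊₁`,
while on independent copies the peer term is `P(S = -1) δ_p̃ + P(T = -1)`.
Since `δ_p̃ = (1 - e₋₁ - e₊₁) δ_p + (e₋₁ - e₊₁)`, the choice of `α*` gives `α* δ_p̃ = e₋₁ - e₊₁`:
the `P(S = -1)` terms cancel, and the `α*`-peer risk of `f` is `(1 - e₋₁ - e₊₁) R_D(f)` plus a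
constant. As `1 - e₋₁ - e₊₁ > 0`, both risks have the same minimisers.
-/

open MeasureTheory Set

section SignValued

variable {Ω : Type*} {Z : Ω → ℤ}

lemma setOf_eq_neg_one_eq_compl (hZ : ∀ ω, Z ω = 1 ∨ Z ω = -1) :
    {ω | Z ω = -1} = {ω | Z ω = 1}ᶜ := by
  ext ω
  rcases hZ ω with h | h <;> simp [h]

variable [MeasurableSpace Ω] {μ : Measure Ω}

lemma measureReal_eq_neg_one [IsProbabilityMeasure μ] (hZm : Measurable Z)
    (hZ : ∀ ω, Z ω = 1 ∨ Z ω = -1) :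
    μ.real {ω | Z ω = -1} = 1 - μ.real {ω | Z ω = 1} := by
  rw [setOf_eq_neg_one_eq_compl hZ]
  exact probReal_compl_eq_one_sub (hZm (measurableSet_singleton 1))

variable [IsFiniteMeasure μ]

lemma measureReal_split_and_sign (hZm : Measurable Z) (hZ : ∀ ω, Z ω = 1 ∨ Z ω = -1)
    (P : Ω → Prop) :
    μ.real {ω | P ω} = μ.real {ω | P ω ∧ Z ω = 1} + μ.real {ω | P ω ∧ Z ω = -1} := by
  have hZ₁ : MeasurableSet {ω | Z ω = 1} := hZm (measurableSet_singleton 1)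
  rw [← measureReal_inter_add_sdiff (s := {ω | P ω}) hZ₁, sdiff_eq,
    ← setOf_eq_neg_one_eq_compl hZ]
  rfl

lemma measureReal_split_sign_and (hZm : Measurable Z) (hZ : ∀ ω, Z ω = 1 ∨ Z ω = -1)
    (P : Ω → Prop) :
    μ.real {ω | P ω} = μ.real {ω | Z ω = 1 ∧ P ω} + μ.real {ω | Z ω = -1 ∧ P ω} := by
  simpa only [and_comm] using measureReal_split_and_sign (μ := μ) hZm hZ P

lemma measureReal_ne_eq_add {U V : Ω → ℤ} (hUm : Measurable U)
    (hU : ∀ ω, U ω = 1 ∨ U ω = -1) (hV : ∀ ω, V ω = 1 ∨ V ω = -1) :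
    μ.real {ω | U ω ≠ V ω}
      = μ.real {ω | U ω = -1 ∧ V ω = 1} + μ.real {ω | U ω = 1 ∧ V ω = -1} := by
  rw [measureReal_split_sign_and hUm hU, add_comm]
  congr 2 <;> ext ω <;> rcases hU ω with h | h <;> rcases hV ω with h' | h' <;> simp [h, h']

lemma prod_measureReal_ne_eq_add {U V : Ω → ℤ} (hUm : Measurable U)
    (hU : ∀ ω, U ω = 1 ∨ U ω = -1) (hV : ∀ ω, V ω = 1 ∨ V ω = -1) :
    (μ.prod μ).real {w | U w.1 ≠ V w.2}
      = μ.real {ω | U ω = -1} * μ.real {ω | V ω = 1}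
        + μ.real {ω | U ω = 1} * μ.real {ω | V ω = -1} :=
  (measureReal_ne_eq_add (U := fun w : Ω × Ω => U w.1) (V := fun w : Ω × Ω => V w.2)
    (hUm.comp measurable_fst) (fun w => hU w.1) (fun w => hV w.2)).trans <|
    congrArg₂ (· + ·) (measureReal_prod_prod {ω | U ω = -1} {ω | V ω = 1})
      (measureReal_prod_prod {ω | U ω = 1} {ω | V ω = -1})

end SignValued

section NoisyLabels

variable {Ω : Type*} [MeasurableSpace Ω] {μ : Measure Ω} [IsProbabilityMeasure μ]
  {S T Y : Ω → ℤ} {ep em : ℝ}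

lemma measureReal_noisy_label_sub (hYm : Measurable Y) (hY : ∀ ω, Y ω = 1 ∨ Y ω = -1)
    (hTm : Measurable T) (hT : ∀ ω, T ω = 1 ∨ T ω = -1)
    (hep : μ.real {ω | T ω = -1 ∧ Y ω = 1} = ep * μ.real {ω | Y ω = 1})
    (hem : μ.real {ω | T ω = 1 ∧ Y ω = -1} = em * μ.real {ω | Y ω = -1}) :
    μ.real {ω | T ω = 1} - μ.real {ω | T ω = -1}
      = (1 - em - ep) * (μ.real {ω | Y ω = 1} - μ.real {ω | Y ω = -1}) + (em - ep) := by
  have hT_one := measureReal_split_and_sign (μ := μ) hYm hY (T · = 1)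
  have hT_neg_one := measureReal_split_and_sign (μ := μ) hYm hY (T · = -1)
  have hY_one := measureReal_split_sign_and (μ := μ) hTm hT (Y · = 1)
  have hY_neg_one := measureReal_split_sign_and (μ := μ) hTm hT (Y · = -1)
  linear_combination hT_one - hT_neg_one - hY_one + hY_neg_one - 2 * hep + 2 * hem
    + (em - ep) * measureReal_eq_neg_one (μ := μ) hYm hY

lemma measureReal_ne_noisy_label (hSm : Measurable S) (hS : ∀ ω, S ω = 1 ∨ S ω = -1)
    (hYm : Measurable Y) (hY : ∀ ω, Y ω = 1 ∨ Y ω = -1)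
    (hTm : Measurable T) (hT : ∀ ω, T ω = 1 ∨ T ω = -1)
    (hY_one : μ.real {ω | Y ω = 1} ≠ 0) (hY_neg_one : μ.real {ω | Y ω = -1} ≠ 0)
    (hep : μ.real {ω | T ω = -1 ∧ Y ω = 1} = ep * μ.real {ω | Y ω = 1})
    (hem : μ.real {ω | T ω = 1 ∧ Y ω = -1} = em * μ.real {ω | Y ω = -1})
    (hCI : ∀ u y y' : ℤ, μ.real {ω | Y ω = y} * μ.real {ω | (S ω = u ∧ T ω = y') ∧ Y ω = y}
      = μ.real {ω | S ω = u ∧ Y ω = y} * μ.real {ω | T ω = y' ∧ Y ω = y}) :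
    μ.real {ω | S ω ≠ T ω}
      = (1 - em - ep) * μ.real {ω | S ω ≠ Y ω} + (em - ep) * μ.real {ω | S ω = -1} + ep := by
  have cell : ∀ {u y y' : ℤ} {r : ℝ}, μ.real {ω | Y ω = y} ≠ 0 →
      μ.real {ω | T ω = y' ∧ Y ω = y} = r * μ.real {ω | Y ω = y} →
      μ.real {ω | (S ω = u ∧ T ω = y') ∧ Y ω = y} = r * μ.real {ω | S ω = u ∧ Y ω = y} :=
    -- conditional independence: conditioning on `S = u` does not change the flip rates of `T`
    fun hy hr => mul_left_cancel₀ hy (by rw [hCI, hr]; ring)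
  have hkeep_one : μ.real {ω | T ω = 1 ∧ Y ω = 1} = (1 - ep) * μ.real {ω | Y ω = 1} := by
    linarith [measureReal_split_sign_and (μ := μ) hTm hT (Y · = 1)]
  have hkeep_neg_one : μ.real {ω | T ω = -1 ∧ Y ω = -1} = (1 - em) * μ.real {ω | Y ω = -1} := by
    linarith [measureReal_split_sign_and (μ := μ) hTm hT (Y · = -1)]
  have hdecomp : μ.real {ω | S ω ≠ T ω}
      = (1 - ep) * μ.real {ω | S ω = -1 ∧ Y ω = 1} + em * μ.real {ω | S ω = -1 ∧ Y ω = -1}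
        + (ep * μ.real {ω | S ω = 1 ∧ Y ω = 1} + (1 - em) * μ.real {ω | S ω = 1 ∧ Y ω = -1}) := by
    rw [measureReal_ne_eq_add hSm hS hT,
      measureReal_split_and_sign hYm hY (fun ω => S ω = -1 ∧ T ω = 1),
      measureReal_split_and_sign hYm hY (fun ω => S ω = 1 ∧ T ω = -1),
      cell hY_one hkeep_one, cell hY_neg_one hem, cell hY_one hep, cell hY_neg_one hkeep_neg_one]
  linear_combination hdecomp
    - (1 - em - ep) * measureReal_ne_eq_add (μ := μ) hSm hS hY
    - em * measureReal_split_and_sign (μ := μ) hYm hY (S · = -1)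
    - ep * measureReal_split_and_sign (μ := μ) hYm hY (S · = 1)
    + ep * measureReal_eq_neg_one (μ := μ) hSm hS

lemma peer_risk_eq (hSm : Measurable S) (hS : ∀ ω, S ω = 1 ∨ S ω = -1)
    (hYm : Measurable Y) (hY : ∀ ω, Y ω = 1 ∨ Y ω = -1)
    (hTm : Measurable T) (hT : ∀ ω, T ω = 1 ∨ T ω = -1)
    (hY_one : μ.real {ω | Y ω = 1} ≠ 0) (hY_neg_one : μ.real {ω | Y ω = -1} ≠ 0)
    (hep : μ.real {ω | T ω = -1 ∧ Y ω = 1} = ep * μ.real {ω | Y ω = 1})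
    (hem : μ.real {ω | T ω = 1 ∧ Y ω = -1} = em * μ.real {ω | Y ω = -1})
    (hCI : ∀ u y y' : ℤ, μ.real {ω | Y ω = y} * μ.real {ω | (S ω = u ∧ T ω = y') ∧ Y ω = y}
      = μ.real {ω | S ω = u ∧ Y ω = y} * μ.real {ω | T ω = y' ∧ Y ω = y})
    {α : ℝ} (hα : α * (μ.real {ω | T ω = 1} - μ.real {ω | T ω = -1}) = em - ep) :
    μ.real {ω | S ω ≠ T ω} - α * (μ.prod μ).real {w | S w.1 ≠ T w.2}
      = (1 - em - ep) * μ.real {ω | S ω ≠ Y ω} + (ep - α * μ.real {ω | T ω = -1}) := by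
  rw [measureReal_ne_noisy_label hSm hS hYm hY hTm hT hY_one hY_neg_one hep hem hCI,
    prod_measureReal_ne_eq_add hSm hS hT]
  linear_combination (-μ.real {ω | S ω = -1}) * hα
    - (α * μ.real {ω | T ω = -1}) * measureReal_eq_neg_one (μ := μ) hSm hS

end NoisyLabels

/-- **Theorem 4: α-weighted peer loss.**
With `α* = 1 - (1 - em - ep) δ_p / δ_p̃`, any minimizer of the expected `α*`-weighted 0-1 peer
risk over the noisy distribution within `ℱ` also minimizes the clean 0-1 risk over `ℱ`. -/
theorem peer_loss_stmt9
    {Ω 𝒳 : Type*} [MeasurableSpace Ω] [MeasurableSpace 𝒳]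
    (μ : Measure Ω) [IsProbabilityMeasure μ]
    (X : Ω → 𝒳) (Y Ytil : Ω → ℤ)
    (hmX : Measurable X) (hmY : Measurable Y) (hmYt : Measurable Ytil)
    (hYval : ∀ ω, Y ω = 1 ∨ Y ω = -1)
    (hYtval : ∀ ω, Ytil ω = 1 ∨ Ytil ω = -1)
    (ep em : ℝ)
    (p : ℝ) (hp : (μ {ω | Y ω = 1}).toReal = p) (hp0 : 0 < p) (hp1 : p < 1)
    (hep : (μ {ω | Ytil ω = -1 ∧ Y ω = 1}).toReal = ep * (μ {ω | Y ω = 1}).toReal)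
    (hem : (μ {ω | Ytil ω = 1 ∧ Y ω = -1}).toReal = em * (μ {ω | Y ω = -1}).toReal)
    -- `Ỹ` is conditionally independent of `X` given `Y`
    (hCI : ∀ (A : Set 𝒳) (y y' : ℤ),
      (μ {ω | Y ω = y}).toReal * (μ {ω | X ω ∈ A ∧ Ytil ω = y' ∧ Y ω = y}).toReal
        = (μ {ω | X ω ∈ A ∧ Y ω = y}).toReal * (μ {ω | Ytil ω = y' ∧ Y ω = y}).toReal)
    (he : em + ep < 1)
    (hδ : (μ {ω | Ytil ω = 1}).toReal - (μ {ω | Ytil ω = -1}).toReal ≠ 0)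
    (α : ℝ)
    (hα : α = 1 - (1 - em - ep) *
      (((μ {ω | Y ω = 1}).toReal - (μ {ω | Y ω = -1}).toReal)
        / ((μ {ω | Ytil ω = 1}).toReal - (μ {ω | Ytil ω = -1}).toReal)))
    (ℱ : Set (𝒳 → ℤ)) (hℱ : ∀ g ∈ ℱ, Measurable g ∧ ∀ x, g x = 1 ∨ g x = -1)
    (ftil : 𝒳 → ℤ) (hmem : ftil ∈ ℱ)
    (hmin : ∀ g ∈ ℱ,
      (μ {ω | ftil (X ω) ≠ Ytil ω}).toReal
          - α * ((μ.prod μ) {w | ftil (X w.1) ≠ Ytil w.2}).toReal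
        ≤ (μ {ω | g (X ω) ≠ Ytil ω}).toReal
          - α * ((μ.prod μ) {w | g (X w.1) ≠ Ytil w.2}).toReal) :
    ∀ g ∈ ℱ, (μ {ω | ftil (X ω) ≠ Y ω}).toReal ≤ (μ {ω | g (X ω) ≠ Y ω}).toReal := by
  simp only [← measureReal_def] at hp hep hem hCI hδ hα hmin ⊢
  have hY_neg_one : μ.real {ω | Y ω = -1} = 1 - p := hp ▸ measureReal_eq_neg_one hmY hYval
  have hαδ : α * (μ.real {ω | Ytil ω = 1} - μ.real {ω | Ytil ω = -1}) = em - ep := by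
    rw [hα, sub_mul, one_mul, mul_assoc, div_mul_cancel₀ _ hδ,
      measureReal_noisy_label_sub hmY hYval hmYt hYtval hep hem]
    ring
  have hrisk : ∀ g ∈ ℱ,
      μ.real {ω | g (X ω) ≠ Ytil ω} - α * (μ.prod μ).real {w | g (X w.1) ≠ Ytil w.2}
        = (1 - em - ep) * μ.real {ω | g (X ω) ≠ Y ω} + (ep - α * μ.real {ω | Ytil ω = -1}) :=
    fun g hg => peer_risk_eq (S := fun ω => g (X ω)) ((hℱ g hg).1.comp hmX)
      (fun ω => (hℱ g hg).2 (X ω)) hmY hYval hmYt hYtval (by linarith) (by linarith) hep hem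
      (fun u y y' => by simpa only [and_assoc, Set.mem_ofPred_eq] using hCI {x | g x = u} y y') hαδ
  intro g hg
  have h := hmin g hg
  rw [hrisk ftil hmem, hrisk g hg] at h
  exact le_of_mul_le_mul_left (by linarith) (by linarith : 0 < 1 - em - ep)
end

section
/- Suppose p = 0.5 and e₋₁ + e₊₁ < 1. Then for any classifier f and loss ℓ : ℝ × {−1,+1} → ℝ: E_{D̃}[ℓ_peer(f(X), Ỹ)] = ((1 − e₋₁ − e₊₁)/2)·(E_D[ℓ(f(X), Y)] − E_D[ℓ(f(X), −Y)]). -/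
/-!
Split every expectation along the events `{Ỹ = w, Y = z}`. Conditional independence makes the
integral of `ℓ(f X, w)` over `{Ỹ = w, Y = z}` the noise rate `P(Ỹ = w | Y = z)` times its integral
over `{Y = z}`, while the peer term only sees the marginal `P(Ỹ = 1) = (1 - e₊₁) p + e₋₁ (1 - p)`.
Collecting terms gives `E_D̃[ℓ_peer] = (1 - e₋₁ - e₊₁) E_D[ℓ_peer]` for every `p`, and for `p = 1/2`
the clean peer risk is half of `E[ℓ(f X, Y)] - E[ℓ(f X, -Y)]`.
-/

open MeasureTheory

lemma comp_eq_indicator_add_indicator_of_pm_one {Ω : Type*} {Z : Ω → ℤ}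
    (hZ : ∀ ω, Z ω = 1 ∨ Z ω = -1) (F : ℤ → Ω → ℝ) :
    (fun ω => F (Z ω) ω)
      = fun ω => {ω | Z ω = 1}.indicator (F 1) ω + {ω | Z ω = -1}.indicator (F (-1)) ω := by
  funext ω
  rcases hZ ω with h | h <;> simp [h]

section PlusMinusOne

variable {Ω : Type*} [MeasurableSpace Ω] {μ : Measure Ω} {Z : Ω → ℤ}

lemma integrable_comp_of_pm_one (hZm : Measurable Z) (hZ : ∀ ω, Z ω = 1 ∨ Z ω = -1)
    {F : ℤ → Ω → ℝ} (h₁ : Integrable (F 1) μ) (h₂ : Integrable (F (-1)) μ) :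
    Integrable (fun ω => F (Z ω) ω) μ := by
  rw [comp_eq_indicator_add_indicator_of_pm_one hZ]
  exact (h₁.indicator (hZm (measurableSet_singleton _))).add
    (h₂.indicator (hZm (measurableSet_singleton _)))

lemma integral_comp_of_pm_one (hZm : Measurable Z) (hZ : ∀ ω, Z ω = 1 ∨ Z ω = -1)
    {F : ℤ → Ω → ℝ} (h₁ : Integrable (F 1) μ) (h₂ : Integrable (F (-1)) μ) :
    ∫ ω, F (Z ω) ω ∂μ
      = ∫ ω in {ω | Z ω = 1}, F 1 ω ∂μ + ∫ ω in {ω | Z ω = -1}, F (-1) ω ∂μ := by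
  have hS (z : ℤ) : MeasurableSet {ω | Z ω = z} := hZm (measurableSet_singleton z)
  rw [comp_eq_indicator_add_indicator_of_pm_one hZ, integral_add (h₁.indicator (hS 1))
    (h₂.indicator (hS (-1))), integral_indicator (hS 1), integral_indicator (hS (-1))]

lemma integral_comp₂_of_pm_one {W : Ω → ℤ} (hWm : Measurable W) (hW : ∀ ω, W ω = 1 ∨ W ω = -1)
    (hZm : Measurable Z) (hZ : ∀ ω, Z ω = 1 ∨ Z ω = -1) {G : ℤ → ℤ → Ω → ℝ}
    (hG : ∀ w z, Integrable (G w z) μ) :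
    ∫ ω, G (W ω) (Z ω) ω ∂μ
      = ∫ ω in {ω | W ω = 1 ∧ Z ω = 1}, G 1 1 ω ∂μ
        + ∫ ω in {ω | W ω = -1 ∧ Z ω = 1}, G (-1) 1 ω ∂μ
        + (∫ ω in {ω | W ω = 1 ∧ Z ω = -1}, G 1 (-1) ω ∂μ
          + ∫ ω in {ω | W ω = -1 ∧ Z ω = -1}, G (-1) (-1) ω ∂μ) := by
  have hS (w : ℤ) : MeasurableSet {ω | W ω = w} := hWm (measurableSet_singleton w)
  have hSlice (z : ℤ) : ∫ ω in {ω | Z ω = z}, G (W ω) z ω ∂μ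
      = ∫ ω in {ω | W ω = 1 ∧ Z ω = z}, G 1 z ω ∂μ
        + ∫ ω in {ω | W ω = -1 ∧ Z ω = z}, G (-1) z ω ∂μ := by
    refine (integral_comp_of_pm_one (F := fun w => G w z) hWm hW (hG 1 z).restrict
      (hG (-1) z).restrict).trans ?_
    rw [Measure.restrict_restrict (hS 1), Measure.restrict_restrict (hS (-1))]
    rfl
  refine (integral_comp_of_pm_one (F := fun z ω => G (W ω) z ω) hZm hZ
    (integrable_comp_of_pm_one (F := fun w => G w 1) hWm hW (hG 1 1) (hG (-1) 1))
    (integrable_comp_of_pm_one (F := fun w => G w (-1)) hWm hW (hG 1 (-1)) (hG (-1) (-1)))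
    ).trans ?_
  rw [hSlice, hSlice]

lemma integral_prod_comp_snd_of_pm_one [SFinite μ] {ν : Measure Ω} [IsFiniteMeasure ν]
    (hZm : Measurable Z) (hZ : ∀ ω, Z ω = 1 ∨ Z ω = -1)
    {F : ℤ → Ω → ℝ} (h₁ : Integrable (F 1) μ) (h₂ : Integrable (F (-1)) μ) :
    ∫ w, F (Z w.2) w.1 ∂(μ.prod ν)
      = ν.real {ω | Z ω = 1} * ∫ ω, F 1 ω ∂μ + ν.real {ω | Z ω = -1} * ∫ ω, F (-1) ω ∂μ := by
  have hSlice (z : ℤ) : ∫ w in {w : Ω × Ω | Z w.2 = z}, F z w.1 ∂(μ.prod ν)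
      = ν.real {ω | Z ω = z} * ∫ ω, F z ω ∂μ := by
    have hprod : {w : Ω × Ω | Z w.2 = z} = Set.univ ×ˢ {ω | Z ω = z} := by ext; simp
    rw [hprod, ← Measure.prod_restrict, Measure.restrict_univ, integral_fun_fst,
      measureReal_restrict_apply_univ, smul_eq_mul]
  refine (integral_comp_of_pm_one (Z := fun w : Ω × Ω => Z w.2) (F := fun z w => F z w.1)
    (hZm.comp measurable_snd) (fun w => hZ w.2) (h₁.comp_fst ν) (h₂.comp_fst ν)).trans ?_
  rw [hSlice, hSlice]

lemma integral_eq_setIntegral_add_of_pm_one (hZm : Measurable Z) (hZ : ∀ ω, Z ω = 1 ∨ Z ω = -1)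
    {g : Ω → ℝ} (hg : Integrable g μ) :
    ∫ ω, g ω ∂μ = ∫ ω in {ω | Z ω = 1}, g ω ∂μ + ∫ ω in {ω | Z ω = -1}, g ω ∂μ :=
  integral_comp_of_pm_one (F := fun _ => g) hZm hZ hg hg

lemma measureReal_eq_add_of_pm_one [IsFiniteMeasure μ] (hZm : Measurable Z)
    (hZ : ∀ ω, Z ω = 1 ∨ Z ω = -1) {s : Set Ω} (hs : MeasurableSet s) :
    μ.real s = μ.real ({ω | Z ω = 1} ∩ s) + μ.real ({ω | Z ω = -1} ∩ s) := by
  have hs_eq : s = ({ω | Z ω = 1} ∩ s) ∪ ({ω | Z ω = -1} ∩ s) := by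
    ext ω; rcases hZ ω with h | h <;> simp [h]
  have hdisj : Disjoint ({ω | Z ω = 1} ∩ s) ({ω | Z ω = -1} ∩ s) :=
    Set.disjoint_left.2 fun ω h₁ h₂ => by
      have : (1 : ℤ) = -1 := h₁.1.symm.trans h₂.1
      omega
  conv_lhs => rw [hs_eq]
  exact measureReal_union hdisj ((hZm (measurableSet_singleton _)).inter hs)

lemma measureReal_add_of_pm_one [IsProbabilityMeasure μ] (hZm : Measurable Z)
    (hZ : ∀ ω, Z ω = 1 ∨ Z ω = -1) :
    μ.real {ω | Z ω = 1} + μ.real {ω | Z ω = -1} = 1 := by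
  simpa using (measureReal_eq_add_of_pm_one (μ := μ) hZm hZ MeasurableSet.univ).symm

end PlusMinusOne

lemma setIntegral_eq_mul_of_measureReal_eq_mul {Ω : Type*} [MeasurableSpace Ω] {μ : Measure Ω}
    [IsFiniteMeasure μ] {s t : Set Ω} (hts : t ⊆ s) {g : Ω → ℝ} {r : ℝ}
    (hr : μ.real t = r * μ.real s)
    (hg : μ.real s * ∫ ω in t, g ω ∂μ = μ.real t * ∫ ω in s, g ω ∂μ) :
    ∫ ω in t, g ω ∂μ = r * ∫ ω in s, g ω ∂μ := by
  by_cases hs : μ.real s = 0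
  · have hs0 : μ s = 0 := (measureReal_eq_zero_iff).1 hs
    rw [setIntegral_measure_zero _ hs0, setIntegral_measure_zero _ (measure_mono_null hts hs0),
      mul_zero]
  · rw [hr, mul_assoc, mul_left_comm] at hg
    exact mul_left_cancel₀ hs hg

section PeerLoss

variable {Ω 𝒳 : Type*} [MeasurableSpace Ω]

/-- `E[ℓ_peer]`: the peer term pairs the feature of one draw with the label of an independent
draw. -/
noncomputable def peerRisk (μ : Measure Ω) (X : Ω → 𝒳) (Y : Ω → ℤ) (L : 𝒳 → ℤ → ℝ) : ℝ :=
  ∫ ω, L (X ω) (Y ω) ∂μ - ∫ w, L (X w.1) (Y w.2) ∂(μ.prod μ)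

variable {μ : Measure Ω} [IsProbabilityMeasure μ] {X : Ω → 𝒳} {Y : Ω → ℤ} {L : 𝒳 → ℤ → ℝ}

theorem peerRisk_noisy_eq_mul {Ytil : Ω → ℤ} (hmY : Measurable Y) (hmYtil : Measurable Ytil)
    (hY : ∀ ω, Y ω = 1 ∨ Y ω = -1) (hYtil : ∀ ω, Ytil ω = 1 ∨ Ytil ω = -1) {ep em : ℝ}
    (hep : μ.real {ω | Ytil ω = -1 ∧ Y ω = 1} = ep * μ.real {ω | Y ω = 1})
    (hem : μ.real {ω | Ytil ω = 1 ∧ Y ω = -1} = em * μ.real {ω | Y ω = -1})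
    (hCI : ∀ y w z : ℤ, μ.real {ω | Y ω = z} * ∫ ω in {ω | Ytil ω = w ∧ Y ω = z}, L (X ω) y ∂μ
      = μ.real {ω | Ytil ω = w ∧ Y ω = z} * ∫ ω in {ω | Y ω = z}, L (X ω) y ∂μ)
    (hL : ∀ y, Integrable (fun ω => L (X ω) y) μ) :
    peerRisk μ X Ytil L = (1 - em - ep) * peerRisk μ X Y L := by
  have hmarg (z : ℤ) : μ.real {ω | Y ω = z}
      = μ.real {ω | Ytil ω = 1 ∧ Y ω = z} + μ.real {ω | Ytil ω = -1 ∧ Y ω = z} :=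
    measureReal_eq_add_of_pm_one hmYtil hYtil (hmY (measurableSet_singleton z))
  have hmargYtil (w : ℤ) : μ.real {ω | Ytil ω = w}
      = μ.real {ω | Ytil ω = w ∧ Y ω = 1} + μ.real {ω | Ytil ω = w ∧ Y ω = -1} := by
    rw [measureReal_eq_add_of_pm_one (s := {ω | Ytil ω = w}) hmY hY
      (hmYtil (measurableSet_singleton w)), Set.inter_comm, Set.inter_comm {ω | Y ω = -1}]
    rfl
  have hrate (w z : ℤ) (r : ℝ)
      (hr : μ.real {ω | Ytil ω = w ∧ Y ω = z} = r * μ.real {ω | Y ω = z}) :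
      ∫ ω in {ω | Ytil ω = w ∧ Y ω = z}, L (X ω) w ∂μ = r * ∫ ω in {ω | Y ω = z}, L (X ω) w ∂μ :=
    setIntegral_eq_mul_of_measureReal_eq_mul (fun _ h => h.2) hr (hCI w w z)
  have hEYtil := integral_comp₂_of_pm_one (G := fun w _ ω => L (X ω) w) hmYtil hYtil hmY hY
    (fun w _ => hL w)
  have hEY := integral_comp_of_pm_one (F := fun y ω => L (X ω) y) hmY hY (hL 1) (hL (-1))
  have hPYtil := integral_prod_comp_snd_of_pm_one (F := fun y ω => L (X ω) y) (ν := μ) hmYtil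
    hYtil (hL 1) (hL (-1))
  have hPY := integral_prod_comp_snd_of_pm_one (F := fun y ω => L (X ω) y) (ν := μ) hmY hY
    (hL 1) (hL (-1))
  rw [hrate 1 1 (1 - ep) (by linarith [hmarg 1]), hrate (-1) 1 ep hep, hrate 1 (-1) em hem,
    hrate (-1) (-1) (1 - em) (by linarith [hmarg (-1)])] at hEYtil
  have hq₁ : μ.real {ω | Ytil ω = 1}
      = (1 - ep) * μ.real {ω | Y ω = 1} + em * μ.real {ω | Y ω = -1} := by
    linarith [hmargYtil 1, hmarg 1]
  have hq₂ : μ.real {ω | Ytil ω = -1}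
      = ep * μ.real {ω | Y ω = 1} + (1 - em) * μ.real {ω | Y ω = -1} := by
    linarith [hmargYtil (-1), hmarg (-1)]
  have hp₂ : μ.real {ω | Y ω = -1} = 1 - μ.real {ω | Y ω = 1} := by
    linarith [measureReal_add_of_pm_one (μ := μ) hmY hY]
  have hφ (y : ℤ) := integral_eq_setIntegral_add_of_pm_one (μ := μ) hmY hY (hL y)
  unfold peerRisk
  rw [hEYtil, hEY, hPYtil, hPY, hq₁, hq₂, hp₂, hφ, hφ]
  ring

theorem peerRisk_eq_of_measureReal_eq_half (hmY : Measurable Y) (hY : ∀ ω, Y ω = 1 ∨ Y ω = -1)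
    (hp : μ.real {ω | Y ω = 1} = 1 / 2) (hL : ∀ y, Integrable (fun ω => L (X ω) y) μ) :
    peerRisk μ X Y L = ((∫ ω, L (X ω) (Y ω) ∂μ) - ∫ ω, L (X ω) (-Y ω) ∂μ) / 2 := by
  have hEY := integral_comp_of_pm_one (F := fun y ω => L (X ω) y) hmY hY (hL 1) (hL (-1))
  have hEnegY := integral_comp_of_pm_one (F := fun y ω => L (X ω) (-y)) hmY hY (hL (-1))
    (by simpa using hL 1)
  have hPY := integral_prod_comp_snd_of_pm_one (F := fun y ω => L (X ω) y) (ν := μ) hmY hY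
    (hL 1) (hL (-1))
  have hφ (y : ℤ) := integral_eq_setIntegral_add_of_pm_one (μ := μ) hmY hY (hL y)
  have hp₂ : μ.real {ω | Y ω = -1} = 1 / 2 := by
    linarith [measureReal_add_of_pm_one (μ := μ) hmY hY]
  unfold peerRisk
  rw [hEY, hEnegY, hPY, hp, hp₂, hφ, hφ, neg_neg]
  ring

end PeerLoss

theorem peer_loss_stmt14_general
    {Ω 𝒳 : Type*} [MeasurableSpace Ω]
    (μ : Measure Ω) [IsProbabilityMeasure μ]
    (X : Ω → 𝒳) (Y Ytil : Ω → ℤ)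
    (hmY : Measurable Y) (hmYt : Measurable Ytil)
    (hYval : ∀ ω, Y ω = 1 ∨ Y ω = -1)
    (hYtval : ∀ ω, Ytil ω = 1 ∨ Ytil ω = -1)
    (ep em : ℝ)
    (hp : (μ {ω | Y ω = 1}).toReal = 1 / 2)
    (hep : (μ {ω | Ytil ω = -1 ∧ Y ω = 1}).toReal = ep * (μ {ω | Y ω = 1}).toReal)
    (hem : (μ {ω | Ytil ω = 1 ∧ Y ω = -1}).toReal = em * (μ {ω | Y ω = -1}).toReal)
    -- `Ỹ` is conditionally independent of `X` given `Y` (functional form)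
    (hCI : ∀ (h : 𝒳 → ℝ), Integrable (fun ω => h (X ω)) μ → ∀ y y' : ℤ,
      (μ {ω | Y ω = y}).toReal * ∫ ω in {ω | Ytil ω = y' ∧ Y ω = y}, h (X ω) ∂μ
        = (μ {ω | Ytil ω = y' ∧ Y ω = y}).toReal * ∫ ω in {ω | Y ω = y}, h (X ω) ∂μ)
    (ℓ : ℝ → ℤ → ℝ) (f : 𝒳 → ℝ)
    (hInt : ∀ y : ℤ, Integrable (fun ω => ℓ (f (X ω)) y) μ) :
    (∫ ω, ℓ (f (X ω)) (Ytil ω) ∂μ) - ∫ w, ℓ (f (X w.1)) (Ytil w.2) ∂(μ.prod μ)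
      = ((1 - em - ep) / 2) *
          ((∫ ω, ℓ (f (X ω)) (Y ω) ∂μ) - ∫ ω, ℓ (f (X ω)) (-Y ω) ∂μ) := by
  have hnoisy := peerRisk_noisy_eq_mul (X := X) (L := fun x y => ℓ (f x) y) hmY hmYt hYval
    hYtval hep hem (fun y w z => hCI (fun x => ℓ (f x) y) (hInt y) z w) hInt
  have hclean := peerRisk_eq_of_measureReal_eq_half (X := X) (L := fun x y => ℓ (f x) y) hmY
    hYval hp hInt
  calc _ = peerRisk μ X Ytil (fun x y => ℓ (f x) y) := rfl
    _ = _ := by rw [hnoisy, hclean]; ring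

/-- When `p = 1/2` and `em + ep < 1`, for any classifier `f` and loss `ℓ`:
`E_D̃[ℓ_peer(f(X), Ỹ)] = ((1 - em - ep)/2) (E_D[ℓ(f(X), Y)] - E_D[ℓ(f(X), -Y)])`. -/
theorem peer_loss_stmt14
    {Ω 𝒳 : Type*} [MeasurableSpace Ω] [MeasurableSpace 𝒳]
    (μ : Measure Ω) [IsProbabilityMeasure μ]
    (X : Ω → 𝒳) (Y Ytil : Ω → ℤ)
    (hmX : Measurable X) (hmY : Measurable Y) (hmYt : Measurable Ytil)
    (hYval : ∀ ω, Y ω = 1 ∨ Y ω = -1)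
    (hYtval : ∀ ω, Ytil ω = 1 ∨ Ytil ω = -1)
    (ep em : ℝ)
    (hp : (μ {ω | Y ω = 1}).toReal = 1 / 2)
    (hep : (μ {ω | Ytil ω = -1 ∧ Y ω = 1}).toReal = ep * (μ {ω | Y ω = 1}).toReal)
    (hem : (μ {ω | Ytil ω = 1 ∧ Y ω = -1}).toReal = em * (μ {ω | Y ω = -1}).toReal)
    -- `Ỹ` is conditionally independent of `X` given `Y` (functional form)
    (hCI : ∀ (h : 𝒳 → ℝ), Integrable (fun ω => h (X ω)) μ → ∀ y y' : ℤ,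
      (μ {ω | Y ω = y}).toReal * ∫ ω in {ω | Ytil ω = y' ∧ Y ω = y}, h (X ω) ∂μ
        = (μ {ω | Ytil ω = y' ∧ Y ω = y}).toReal * ∫ ω in {ω | Y ω = y}, h (X ω) ∂μ)
    (he : em + ep < 1)
    (ℓ : ℝ → ℤ → ℝ) (f : 𝒳 → ℝ) (hmf : Measurable f)
    (hInt : ∀ y : ℤ, Integrable (fun ω => ℓ (f (X ω)) y) μ) :
    (∫ ω, ℓ (f (X ω)) (Ytil ω) ∂μ) - ∫ w, ℓ (f (X w.1)) (Ytil w.2) ∂(μ.prod μ)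
      = ((1 - em - ep) / 2) *
          ((∫ ω, ℓ (f (X ω)) (Y ω) ∂μ) - ∫ ω, ℓ (f (X ω)) (-Y ω) ∂μ) :=
  peer_loss_stmt14_general μ X Y Ytil hmY hmYt hYval hYtval ep em hp hep hem hCI ℓ f hInt
end
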